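/- With F and P the explicit tile and discrete set in GL_n(ℝ) defined below, the translates of F by distinct elements of P are disjoint: F·p ∩ F·q = ∅ for all p ≠ q in P, where F·p = {ap : a ∈ F}. -/

import Mathlib

noncomputable section

/-- `M_n(ℝ)`, the `n × n` real matrices, identified with `ℝ^{n²}`. -/
abbrev Mn (n : ℕ) : Type := Matrix (Fin n) (Fin n) ℝ

/-- The tile `F ⊆ GL_n(ℝ)`: matrices `s • (k * w * y)` with `s ∈ [1,2)`,
`k` orthogonal, `w = diag(w₁, …, w_{n-1}, (w₁⋯w_{n-1})⁻¹)` with each `w_i ∈ [1,2)`,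
and `y` unit upper triangular with strict upper entries in `[0,1)`. -/
def Fset (n : ℕ) : Set (Mn n) :=
  {a | ∃ (s : ℝ) (k : Mn n) (wd : Fin n → ℝ) (y : Mn n),
    s ∈ Set.Ico (1 : ℝ) 2 ∧
    k.transpose * k = 1 ∧
    (∀ i : Fin n, (i : ℕ) < n - 1 → wd i ∈ Set.Ico (1 : ℝ) 2) ∧
    (∀ i : Fin n, (i : ℕ) = n - 1 →
      wd i = (∏ j ∈ Finset.filter (fun j : Fin n => (j : ℕ) < n - 1) Finset.univ, wd j)⁻¹) ∧
    (∀ i, y i i = 1) ∧ (∀ i j : Fin n, j < i → y i j = 0) ∧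
    (∀ i j : Fin n, i < j → y i j ∈ Set.Ico (0 : ℝ) 1) ∧
    a = s • (k * Matrix.diagonal wd * y)}

/-- The discrete set `P ⊆ GL_n(ℝ)`: matrices `2^λ • u` with `u` upper triangular,
`u_{ii} = 2^{κ_i}`, `u_{ij} = 2^{κ_j} μ_{ij}` for `i < j`, where `λ, κ_i, μ_{ij} ∈ ℤ`
and `κ₁ + ⋯ + κ_n = 0` (i.e. `κ_n = -(κ₁ + ⋯ + κ_{n-1})`). -/
def Pset (n : ℕ) : Set (Mn n) :=
  {p | ∃ (lam : ℤ) (κ : Fin n → ℤ) (μ : Fin n → Fin n → ℤ),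
    (∑ i, κ i) = 0 ∧
    p = (2 : ℝ) ^ lam • Matrix.of (fun i j : Fin n =>
      if i = j then (2 : ℝ) ^ (κ i)
      else if i < j then (2 : ℝ) ^ (κ j) * (μ i j : ℝ)
      else 0)}

/-- The enlarged tile `F_o`: as `F`, but with `s, w_i ∈ (1-ε, 2+ε)` and strict upper
entries of `y` in `(-ε, 1+ε)`. -/
def FoSet (n : ℕ) (ε : ℝ) : Set (Mn n) :=
  {a | ∃ (s : ℝ) (k : Mn n) (wd : Fin n → ℝ) (y : Mn n),
    s ∈ Set.Ioo (1 - ε) (2 + ε) ∧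
    k.transpose * k = 1 ∧
    (∀ i : Fin n, (i : ℕ) < n - 1 → wd i ∈ Set.Ioo (1 - ε) (2 + ε)) ∧
    (∀ i : Fin n, (i : ℕ) = n - 1 →
      wd i = (∏ j ∈ Finset.filter (fun j : Fin n => (j : ℕ) < n - 1) Finset.univ, wd j)⁻¹) ∧
    (∀ i, y i i = 1) ∧ (∀ i j : Fin n, j < i → y i j = 0) ∧
    (∀ i j : Fin n, i < j → y i j ∈ Set.Ioo (-ε) (1 + ε)) ∧
    a = s • (k * Matrix.diagonal wd * y)}

/-!
Write `a = s k w y ∈ F` and `p = 2^λ ν diag(2^κ) ∈ P` with `ν` unipotent and integral. Then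
`a p = k T` with `T = diag(s 2^λ w) (y ν) diag(2^κ)` upper triangular with positive diagonal, so
`T` is determined by `a p` (uniqueness of the QR decomposition). The product of the diagonal
entries of `T` is `(s 2^λ)^n`, since `∏ wᵢ = 1` and `∑ κᵢ = 0`; this fixes `s 2^λ`, hence `λ`
because `s ∈ [1,2)`. The diagonal entries `wᵢ 2^κᵢ` then fix `κ`, and finally `y ν` fixes `ν`
because the entries of `y` lie in `[0,1)`.
-/

open Matrix Finset

lemma Int.log_mul_zpow {R : Type*} [Field R] [LinearOrder R] [IsStrictOrderedRing R] [FloorRing R]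
    {b : ℕ} (hb : 1 < b) {s : R} (hs : s ∈ Set.Ico 1 (b : R)) (a : ℤ) :
    Int.log b (s * (b : R) ^ a) = a := by
  have hpow : (0 : R) < (b : R) ^ a := zpow_pos (by exact_mod_cast (by omega : 0 < b)) a
  have hx : 0 < s * (b : R) ^ a := mul_pos (by linarith [hs.1]) hpow
  refine le_antisymm ?_ ((Int.zpow_le_iff_le_log hb hx).1 (le_mul_of_one_le_left hpow.le hs.1))
  rw [← Int.lt_add_one_iff, ← Int.lt_zpow_iff_log_lt hb hx, zpow_add_one₀ (by positivity),
    mul_comm _ (b : R)]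
  exact mul_lt_mul_of_pos_right hs.2 hpow

lemma eq_and_eq_of_mul_two_zpow_eq {s s' : ℝ} {a b : ℤ} (hs : s ∈ Set.Ico (1 : ℝ) 2)
    (hs' : s' ∈ Set.Ico (1 : ℝ) 2) (h : s * 2 ^ a = s' * 2 ^ b) : a = b ∧ s = s' := by
  have hlog : ∀ {t : ℝ}, t ∈ Set.Ico (1 : ℝ) 2 → ∀ c : ℤ, Int.log 2 (t * 2 ^ c) = c :=
    fun ht c => by simpa using Int.log_mul_zpow (R := ℝ) one_lt_two (by simpa using ht) c
  obtain rfl : a = b := by rw [← hlog hs a, ← hlog hs' b, h]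
  exact ⟨rfl, mul_right_cancel₀ (zpow_ne_zero a two_ne_zero) h⟩

lemma Int.eq_of_add_intCast_eq {R : Type*} [Ring R] [LinearOrder R] [IsStrictOrderedRing R]
    [FloorRing R] {y y' : R} {m m' : ℤ} (hy : y ∈ Set.Ico 0 1) (hy' : y' ∈ Set.Ico 0 1)
    (h : y + m = y' + m') : m = m' := by
  have := congrArg Int.floor h
  rwa [Int.floor_add_intCast, Int.floor_add_intCast, Int.floor_eq_zero_iff.2 hy,
    Int.floor_eq_zero_iff.2 hy', zero_add, zero_add] at this

lemma Finset.prod_zpow_eq_zpow_sum {ι G₀ : Type*} [CommGroupWithZero G₀] {a : G₀} (ha : a ≠ 0)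
    (s : Finset ι) (f : ι → ℤ) : ∏ i ∈ s, a ^ f i = a ^ ∑ i ∈ s, f i := by
  induction s using Finset.cons_induction with
  | empty => simp
  | cons i s hi ih => rw [prod_cons, sum_cons, ih, zpow_add₀ ha]

section Triangular

variable {ι R : Type*} [Fintype ι] [DecidableEq ι] [LinearOrder ι]

lemma Matrix.IsUpperTriangular.isDiag_of_transpose_mul_self [CommRing R] {M : Matrix ι ι R}
    (hM : M.IsUpperTriangular) (ho : Mᵀ * M = 1) : M.IsDiag := by
  have : Invertible M := invertibleOfLeftInverse M Mᵀ ho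
  have hMt : Mᵀ.IsUpperTriangular := by
    rw [← inv_eq_left_inv ho]
    exact blockTriangular_inv_of_blockTriangular hM
  intro i j hij
  rcases hij.lt_or_gt with h | h
  · exact hMt h
  · exact hM h

lemma Matrix.IsUpperTriangular.eq_of_orthogonal_mul_eq [Field R] [LinearOrder R]
    [IsStrictOrderedRing R] {k k' T T' : Matrix ι ι R} (hk : kᵀ * k = 1) (hk' : k'ᵀ * k' = 1)
    (hT : T.IsUpperTriangular) (hT' : T'.IsUpperTriangular) (hTd : ∀ i, 0 < T i i)
    (hT'd : ∀ i, 0 < T' i i) (h : k * T = k' * T') : T = T' := by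
  set M := k'ᵀ * k
  have hMT : M * T = T' := by rw [Matrix.mul_assoc, h, ← Matrix.mul_assoc, hk', Matrix.one_mul]
  have hMo : Mᵀ * M = 1 := by
    rw [transpose_mul, transpose_transpose, Matrix.mul_assoc, ← Matrix.mul_assoc k',
      mul_eq_one_comm.mp hk', Matrix.one_mul, hk]
  have hTu : IsUnit T.det := by
    rw [det_of_isUpperTriangular hT]
    exact (prod_pos fun i _ => hTd i).ne'.isUnit
  have : Invertible T := T.invertibleOfIsUnitDet hTu
  have hMu : M.IsUpperTriangular := by
    rw [← Matrix.mul_nonsing_inv_cancel_right T M hTu, hMT]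
    exact hT'.mul (blockTriangular_inv_of_blockTriangular hT)
  have hMd : diagonal M.diag = M :=
    (isDiag_iff_diagonal_diag M).1 (hMu.isDiag_of_transpose_mul_self hMo)
  have hMpos : ∀ i, 0 < M i i := fun i => by
    have hi := congrFun (congrFun hMT i) i
    rw [← hMd, diagonal_mul] at hi
    exact pos_of_mul_pos_left (hi ▸ hT'd i) (hTd i).le
  have hM1 : M = 1 := by
    rw [← hMd, ← diagonal_one]
    congr 1
    funext i
    have hi := congrFun (congrFun hMo i) i
    rw [← hMd, diagonal_transpose, diagonal_mul_diagonal] at hi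
    simp only [diagonal_apply_eq, one_apply_eq, diag_apply] at hi
    show M i i = 1
    nlinarith [hMpos i]
  rw [← hMT, hM1, Matrix.one_mul]

end Triangular

section DiagonalMulMulDiagonal

variable {ι R : Type*} [Fintype ι] [DecidableEq ι] [CommRing R]

lemma Matrix.smul_mul_diagonal_mul_smul_mul_diagonal (s t : R) (k y N : Matrix ι ι R)
    (w e : ι → R) :
    s • (k * diagonal w * y) * (t • (N * diagonal e)) =
      k * (diagonal (fun i => s * t * w i) * (y * N) * diagonal e) := by
  have : diagonal (fun i => s * t * w i) = (s * t) • diagonal w := by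
    rw [← diagonal_smul]; rfl
  simp only [this, Matrix.smul_mul, Matrix.mul_smul, smul_smul, Matrix.mul_assoc, mul_comm t s]

lemma Matrix.diagonal_mul_mul_diagonal_apply (d e : ι → R) (N : Matrix ι ι R) (i j : ι) :
    (diagonal d * N * diagonal e) i j = d i * N i j * e j := by
  rw [mul_diagonal, diagonal_mul]

lemma Matrix.BlockTriangular.diagonal_mul_mul_diagonal {α : Type*} [LinearOrder α] {b : ι → α}
    {N : Matrix ι ι R} (hN : N.BlockTriangular b) (d e : ι → R) :
    (diagonal d * N * diagonal e).BlockTriangular b :=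
  ((blockTriangular_diagonal d).mul hN).mul (blockTriangular_diagonal e)

lemma Matrix.eq_of_diagonal_mul_mul_diagonal_eq [IsDomain R] {d e : ι → R} (hd : ∀ i, d i ≠ 0)
    (he : ∀ i, e i ≠ 0) {N N' : Matrix ι ι R}
    (h : diagonal d * N * diagonal e = diagonal d * N' * diagonal e) : N = N' := by
  ext i j
  have hij := congrFun (congrFun h i) j
  rw [diagonal_mul_mul_diagonal_apply, diagonal_mul_mul_diagonal_apply] at hij
  exact mul_left_cancel₀ (hd i) (mul_right_cancel₀ (he j) hij)

end DiagonalMulMulDiagonal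

section UnitUpper

variable {ι R : Type*} [DecidableEq ι] [LinearOrder ι]

def Matrix.unitUpper [Zero R] [One R] (ν : ι → ι → R) : Matrix ι ι R :=
  of fun i j => if i = j then 1 else if i < j then ν i j else 0

lemma Matrix.unitUpper_isUpperTriangular [Zero R] [One R] (ν : ι → ι → R) :
    (unitUpper ν).IsUpperTriangular := fun i j (hji : j < i) => by
  simp [unitUpper, hji.ne', hji.not_gt]

lemma Matrix.IsUpperTriangular.mul_unitUpper_apply_self [Fintype ι] [Semiring R] {y : Matrix ι ι R}
    (hy : y.IsUpperTriangular) (ν : ι → ι → R) (i : ι) : (y * unitUpper ν) i i = y i i := by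
  rw [mul_apply, sum_eq_single i]
  · simp [unitUpper]
  · intro l _ hl
    rcases hl.lt_or_gt with h | h
    · rw [hy h, zero_mul]
    · simp [unitUpper, h.ne', h.not_gt]
  · simp

lemma Matrix.IsUpperTriangular.diagonal_mul_mul_unitUpper_mul_diagonal_apply_self [Fintype ι]
    [CommRing R] {y : Matrix ι ι R} (hy : y.IsUpperTriangular) (hy1 : ∀ i, y i i = 1)
    (d e : ι → R) (ν : ι → ι → R) (i : ι) :
    (diagonal d * (y * unitUpper ν) * diagonal e) i i = d i * e i := by
  rw [diagonal_mul_mul_diagonal_apply, hy.mul_unitUpper_apply_self, hy1, mul_one]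

lemma Matrix.IsUpperTriangular.mul_unitUpper_apply_of_lt [Fintype ι] [LocallyFiniteOrder ι]
    [Semiring R] {y : Matrix ι ι R} (hy : y.IsUpperTriangular) (hy1 : ∀ i, y i i = 1)
    (ν : ι → ι → R) {i j : ι} (hij : i < j) :
    (y * unitUpper ν) i j = y i j + ν i j + ∑ l ∈ Ioo i j, y i l * ν l j := by
  have hsupp : ∀ l ∉ Icc i j, y i l * unitUpper ν l j = 0 := fun l hl => by
    rcases not_and_or.1 (mem_Icc.not.1 hl) with h | h
    · rw [hy (not_le.1 h), zero_mul]
    · simp [unitUpper, (not_le.1 h).ne', (not_le.1 h).not_gt]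
  rw [mul_apply, ← sum_subset (subset_univ _) fun l _ hl => hsupp l hl,
    Icc_eq_cons_Ioc hij.le, sum_cons, Ioc_eq_cons_Ioo hij, sum_cons]
  have hIoo : ∑ l ∈ Ioo i j, y i l * unitUpper ν l j = ∑ l ∈ Ioo i j, y i l * ν l j :=
    sum_congr rfl fun l hl => by simp [unitUpper, (mem_Ioo.1 hl).2, (mem_Ioo.1 hl).2.ne]
  rw [hIoo]
  simp [unitUpper, hij, hij.ne, hy1]
  abel

/-- Induct on the row `i` downwards and, within it, on the column `j` upwards: the entry
`(y ν)ᵢⱼ` is `yᵢⱼ + νᵢⱼ` plus terms already known to agree, and `yᵢⱼ ∈ [0,1)` then singles out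
the integer `νᵢⱼ`. -/
lemma Matrix.unitUpper_eq_of_mul_eq [Fintype ι] [LocallyFiniteOrder ι] {y y' : Matrix ι ι ℝ}
    (hy : y.IsUpperTriangular) (hy1 : ∀ i, y i i = 1) (hyf : ∀ i j, i < j → y i j ∈ Set.Ico 0 1)
    (hy' : y'.IsUpperTriangular) (hy'1 : ∀ i, y' i i = 1)
    (hy'f : ∀ i j, i < j → y' i j ∈ Set.Ico 0 1) {μ μ' : ι → ι → ℤ}
    (h : y * unitUpper (fun i j => (μ i j : ℝ)) = y' * unitUpper (fun i j => (μ' i j : ℝ))) :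
    unitUpper (fun i j => (μ i j : ℝ)) = unitUpper (fun i j => (μ' i j : ℝ)) := by
  have key : ∀ i j, i < j → y i j = y' i j ∧ μ i j = μ' i j := by
    intro i
    induction i using WellFoundedGT.induction with | _ i ihi
    intro j
    induction j using WellFoundedLT.induction with | _ j ihj
    intro hij
    have hij' := congrFun (congrFun h i) j
    rw [hy.mul_unitUpper_apply_of_lt hy1 _ hij, hy'.mul_unitUpper_apply_of_lt hy'1 _ hij,
      sum_congr rfl fun l hl => by
        obtain ⟨hil, hlj⟩ := mem_Ioo.1 hl
        rw [(ihj l hlj hil).1, (ihi l hil j hlj).2],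
      add_left_inj] at hij'
    have hμ := Int.eq_of_add_intCast_eq (hyf i j hij) (hy'f i j hij) hij'
    exact ⟨by rw [hμ] at hij'; linarith, hμ⟩
  ext i j
  rcases lt_trichotomy i j with hij | rfl | hij
  · simp [unitUpper, hij, hij.ne, (key i j hij).2]
  · simp [unitUpper]
  · simp [unitUpper, hij.ne', hij.not_gt]

end UnitUpper

section Tile

variable {m : ℕ}

/-- The diagonal factor `w` of the tile `F` in dimension `m + 1`. -/
def IsTileDiagonal (m : ℕ) (w : Fin (m + 1) → ℝ) : Prop :=
  (∀ i : Fin (m + 1), (i : ℕ) < m → w i ∈ Set.Ico (1 : ℝ) 2) ∧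
    ∀ i : Fin (m + 1), (i : ℕ) = m →
      w i = (∏ j ∈ filter (fun j : Fin (m + 1) => (j : ℕ) < m) univ, w j)⁻¹

lemma Fin.filter_not_val_lt_eq_last :
    filter (fun j : Fin (m + 1) => ¬ (j : ℕ) < m) univ = {Fin.last m} := by
  ext j
  simp only [mem_filter, mem_univ, true_and, mem_singleton, Fin.ext_iff, Fin.val_last]
  omega

namespace IsTileDiagonal

variable {w w' : Fin (m + 1) → ℝ}

lemma prod_init_pos (hw : IsTileDiagonal m w) :
    0 < ∏ j ∈ filter (fun j : Fin (m + 1) => (j : ℕ) < m) univ, w j :=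
  prod_pos fun j hj => zero_lt_one.trans_le (hw.1 j (mem_filter.1 hj).2).1

lemma pos (hw : IsTileDiagonal m w) (i : Fin (m + 1)) : 0 < w i := by
  rcases (Nat.lt_succ_iff.1 i.isLt).lt_or_eq with hi | hi
  · exact zero_lt_one.trans_le (hw.1 i hi).1
  · rw [hw.2 i hi]
    exact inv_pos.2 hw.prod_init_pos

lemma prod_eq_one (hw : IsTileDiagonal m w) : ∏ i, w i = 1 := by
  rw [← prod_filter_mul_prod_filter_not univ (fun j : Fin (m + 1) => (j : ℕ) < m),
    Fin.filter_not_val_lt_eq_last, prod_singleton, hw.2 _ (Fin.val_last m),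
    mul_inv_cancel₀ hw.prod_init_pos.ne']

lemma eq_of_mul_two_zpow_eq (hw : IsTileDiagonal m w) (hw' : IsTileDiagonal m w')
    {κ κ' : Fin (m + 1) → ℤ} (h : ∀ i, w i * 2 ^ κ i = w' i * 2 ^ κ' i) : w = w' ∧ κ = κ' := by
  have hinit : ∀ i : Fin (m + 1), (i : ℕ) < m → κ i = κ' i ∧ w i = w' i := fun i hi =>
    eq_and_eq_of_mul_two_zpow_eq (hw.1 i hi) (hw'.1 i hi) (h i)
  obtain rfl : w = w' := funext fun i => by
    rcases (Nat.lt_succ_iff.1 i.isLt).lt_or_eq with hi | hi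
    · exact (hinit i hi).2
    · rw [hw.2 i hi, hw'.2 i hi, prod_congr rfl fun j hj => (hinit j (mem_filter.1 hj).2).2]
  exact ⟨rfl, funext fun i => zpow_right_injective₀ two_pos one_lt_two.ne'
    (mul_left_cancel₀ (hw.pos i).ne' (h i))⟩

lemma prod_mul_mul_two_zpow (hw : IsTileDiagonal m w) {κ : Fin (m + 1) → ℤ} (hκ : ∑ i, κ i = 0)
    (c : ℝ) : ∏ i, c * w i * 2 ^ κ i = c ^ (m + 1) := by
  rw [prod_mul_distrib, prod_mul_distrib, prod_const, hw.prod_eq_one,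
    prod_zpow_eq_zpow_sum two_ne_zero, hκ, card_univ, Fintype.card_fin, zpow_zero, mul_one, mul_one]

end IsTileDiagonal

lemma exists_of_mem_Fset {a : Mn (m + 1)} (ha : a ∈ Fset (m + 1)) :
    ∃ (s : ℝ) (k : Mn (m + 1)) (w : Fin (m + 1) → ℝ) (y : Mn (m + 1)),
      s ∈ Set.Ico (1 : ℝ) 2 ∧ kᵀ * k = 1 ∧ IsTileDiagonal m w ∧ y.IsUpperTriangular ∧
      (∀ i, y i i = 1) ∧ (∀ i j, i < j → y i j ∈ Set.Ico (0 : ℝ) 1) ∧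
      a = s • (k * diagonal w * y) := by
  obtain ⟨s, k, w, y, hs, hk, hw, hwlast, hy1, hyu, hyf, rfl⟩ := ha
  simp only [Nat.add_sub_cancel] at hw hwlast
  exact ⟨s, k, w, y, hs, hk, ⟨hw, hwlast⟩, fun i j => hyu i j, hy1, hyf, rfl⟩

lemma exists_of_mem_Pset {n : ℕ} {p : Mn n} (hp : p ∈ Pset n) :
    ∃ (lam : ℤ) (κ : Fin n → ℤ) (μ : Fin n → Fin n → ℤ), ∑ i, κ i = 0 ∧
      p = (2 : ℝ) ^ lam • (unitUpper (fun i j => (μ i j : ℝ)) * diagonal fun j => 2 ^ κ j) := by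
  obtain ⟨lam, κ, μ, hκ, rfl⟩ := hp
  refine ⟨lam, κ, μ, hκ, congrArg _ ?_⟩
  ext i j
  rw [mul_diagonal]
  simp only [unitUpper, of_apply]
  split_ifs with h1 h2 <;> simp [h1, mul_comm]

end Tile

lemma eq_of_mem_Pset_of_mul_eq_mul {n : ℕ} {a a' p q : Mn n} (ha : a ∈ Fset n)
    (ha' : a' ∈ Fset n) (hp : p ∈ Pset n) (hq : q ∈ Pset n) (h : a * p = a' * q) : p = q := by
  rcases n with _ | m
  · exact Subsingleton.elim p q
  obtain ⟨s, k, w, y, hs, hk, hw, hyu, hy1, hyf, rfl⟩ := exists_of_mem_Fset ha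
  obtain ⟨s', k', w', y', hs', hk', hw', hy'u, hy'1, hy'f, rfl⟩ := exists_of_mem_Fset ha'
  obtain ⟨lam, κ, μ, hκ, rfl⟩ := exists_of_mem_Pset hp
  obtain ⟨lam', κ', μ', hκ', rfl⟩ := exists_of_mem_Pset hq
  simp only [smul_mul_diagonal_mul_smul_mul_diagonal] at h
  have hN := hyu.mul (unitUpper_isUpperTriangular fun i j => (μ i j : ℝ))
  have hN' := hy'u.mul (unitUpper_isUpperTriangular fun i j => (μ' i j : ℝ))
  have hc : 0 < s * 2 ^ lam := mul_pos (by linarith [hs.1]) (zpow_pos two_pos _)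
  have hc' : 0 < s' * 2 ^ lam' := mul_pos (by linarith [hs'.1]) (zpow_pos two_pos _)
  have hT := IsUpperTriangular.eq_of_orthogonal_mul_eq hk hk'
    (hN.diagonal_mul_mul_diagonal _ _) (hN'.diagonal_mul_mul_diagonal _ _)
    (fun i => by
      rw [hyu.diagonal_mul_mul_unitUpper_mul_diagonal_apply_self hy1]
      exact mul_pos (mul_pos hc (hw.pos i)) (zpow_pos two_pos _))
    (fun i => by
      rw [hy'u.diagonal_mul_mul_unitUpper_mul_diagonal_apply_self hy'1]
      exact mul_pos (mul_pos hc' (hw'.pos i)) (zpow_pos two_pos _)) h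
  have hdiag : ∀ i, s * 2 ^ lam * w i * 2 ^ κ i = s' * 2 ^ lam' * w' i * 2 ^ κ' i := fun i => by
    simpa only [hyu.diagonal_mul_mul_unitUpper_mul_diagonal_apply_self hy1,
      hy'u.diagonal_mul_mul_unitUpper_mul_diagonal_apply_self hy'1] using congrFun (congrFun hT i) i
  have hcc' : s * 2 ^ lam = s' * 2 ^ lam' := by
    have hprod := prod_congr rfl fun i (_ : i ∈ univ) => hdiag i
    rw [hw.prod_mul_mul_two_zpow hκ, hw'.prod_mul_mul_two_zpow hκ'] at hprod
    exact (pow_left_inj₀ hc.le hc'.le m.succ_ne_zero).1 hprod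
  obtain ⟨rfl, rfl⟩ := eq_and_eq_of_mul_two_zpow_eq hs hs' hcc'
  obtain ⟨rfl, rfl⟩ := hw.eq_of_mul_two_zpow_eq hw' fun i =>
    mul_left_cancel₀ hc.ne' (by simpa only [mul_assoc] using hdiag i)
  rw [unitUpper_eq_of_mul_eq hyu hy1 hyf hy'u hy'1 hy'f (eq_of_diagonal_mul_mul_diagonal_eq
    (fun i => (mul_pos hc (hw.pos i)).ne') (fun i => (zpow_pos two_pos _).ne') hT)]

theorem stmt_11_general (n : ℕ) (p q : Mn n) (hp : p ∈ Pset n) (hq : q ∈ Pset n)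
    (hpq : p ≠ q) :
    ((· * p) '' Fset n) ∩ ((· * q) '' Fset n) = ∅ := by
  rw [Set.eq_empty_iff_forall_notMem]
  rintro _ ⟨⟨a, ha, rfl⟩, a', ha', h⟩
  exact hpq (eq_of_mem_Pset_of_mul_eq_mul ha ha' hp hq h.symm)

/-- The translates of the tile `F` by distinct elements of the discrete
set `P` are disjoint: `F·p ∩ F·q = ∅` for all `p ≠ q` in `P`, where
`F·p = {a * p : a ∈ F}`. -/
theorem stmt_11 (n : ℕ) (hn : 1 ≤ n) (p q : Mn n) (hp : p ∈ Pset n) (hq : q ∈ Pset n)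
    (hpq : p ≠ q) :
    ((· * p) '' Fset n) ∩ ((· * q) '' Fset n) = ∅ :=
  stmt_11_general n p q hp hq hpq
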